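/- arXiv:2411.10093 — 2 statements merged into one kernel-verified Lean document; each statement's English description precedes it below -/
import Mathlib

section
/- (Reduction rule 2, deletion of an innermost universal variable.) Let φ be a CNF formula over x₁,…,xₙ in which no clause contains both the literal xₙ and the literal ¬xₙ, and let φ' be the CNF formula over x₁,…,xₙ₋₁ obtained from φ by deleting every literal on xₙ from every clause (keeping possibly emptied clauses, an empty clause being unsatisfiable). Then for every choice of quantifiers Q₁,…,Qₙ₋₁ ∈ {∃,∀}, the quantified formula Q₁x₁⋯Qₙ₋₁xₙ₋₁ ∀xₙ φ is true if and only if Q₁x₁⋯Qₙ₋₁xₙ₋₁ φ' is true. -/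
/-- Quantifiers for quantified Boolean formulas. -/
inductive Quant
  | ex  : Quant
  | all : Quant

/-- A CNF formula over the variables `x₁, …, xₙ`: a finite list of clauses,
each clause being a finite set of literals, a literal being a pair of a
variable and a polarity (`true` for `xᵢ`, `false` for `¬xᵢ`). -/
abbrev CNF (n : ℕ) := List (Finset (Fin n × Bool))

/-- A valuation `ν` satisfies a CNF formula `φ` if every clause of `φ`
contains a literal made true by `ν`. -/
def CNF.sat {n : ℕ} (ν : Fin n → Bool) (φ : CNF n) : Prop :=
  ∀ C ∈ φ, ∃ l ∈ C, ν l.1 = l.2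

/-- Truth of the quantified Boolean formula `Q₁x₁ ⋯ Qₙxₙ, P`:
the values of `x₁, …, xₙ` are quantified in this order. -/
def QbfTrue : {n : ℕ} → (Fin n → Quant) → ((Fin n → Bool) → Prop) → Prop
  | 0, _, P => P (fun i => i.elim0)
  | _ + 1, Q, P =>
    match Q 0 with
    | Quant.ex => ∃ b, QbfTrue (fun i => Q i.succ) (fun ν => P (Fin.cons b ν))
    | Quant.all => ∀ b, QbfTrue (fun i => Q i.succ) (fun ν => P (Fin.cons b ν))

/-- Deletion of every literal on the innermost variable `xₙ₊₁ = Fin.last n` from a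
clause, the remaining literals (on `x₁, …, xₙ`, i.e. on variables of the form
`Fin.castSucc i`) being recast as literals over `x₁, …, xₙ`. -/
def Clause.dropLast {n : ℕ} (C : Finset (Fin (n + 1) × Bool)) :
    Finset (Fin n × Bool) :=
  Finset.univ.filter (fun l : Fin n × Bool => (l.1.castSucc, l.2) ∈ C)

lemma qbf_congr : ∀ {n : ℕ} (Q : Fin n → Quant) (P P' : (Fin n → Bool) → Prop),
    (∀ ν, P ν ↔ P' ν) → (QbfTrue Q P ↔ QbfTrue Q P')
  | 0, Q, P, P', h => by simp [QbfTrue, h]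
  | n + 1, Q, P, P', h => by
    unfold QbfTrue
    cases Q 0 with
    | ex => exact exists_congr fun b => qbf_congr _ _ _ fun ν => h _
    | all => exact forall_congr' fun b => qbf_congr _ _ _ fun ν => h _

lemma qbf_snoc_all : ∀ {n : ℕ} (Q : Fin n → Quant) (P : (Fin (n + 1) → Bool) → Prop),
    QbfTrue (Fin.snoc Q Quant.all) P ↔ QbfTrue Q (fun ν => ∀ b, P (Fin.snoc ν b))
  | 0, Q, P => by
    show QbfTrue (Fin.snoc Q Quant.all) P ↔ _
    have h0 : (Fin.snoc Q Quant.all : Fin 1 → Quant) 0 = Quant.all := by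
      exact Fin.snoc_last _ _
    unfold QbfTrue
    rw [h0]
    simp only [QbfTrue]
    constructor
    · intro h b
      have := h b
      convert this using 2
      funext i
      fin_cases i
      simp [Fin.snoc]
    · intro h b
      have := h b
      convert this using 2
      funext i
      fin_cases i
      simp [Fin.snoc]
  | n + 1, Q, P => by
    have h0 : (Fin.snoc Q Quant.all : Fin (n + 2) → Quant) 0 = Q 0 := by
      have : (0 : Fin (n + 2)) = Fin.castSucc 0 := rfl
      rw [this, Fin.snoc_castSucc]
    have hsucc : (fun i : Fin (n + 1) => (Fin.snoc Q Quant.all : Fin (n + 2) → Quant) i.succ)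
        = Fin.snoc (fun i : Fin n => Q i.succ) Quant.all := by
      funext i
      induction i using Fin.lastCases with
      | last =>
        rw [Fin.succ_last, Fin.snoc_last, Fin.snoc_last]
      | cast i =>
        rw [Fin.snoc_castSucc, Fin.succ_castSucc, Fin.snoc_castSucc]
    have hcs : ∀ (b : Bool) (ν : Fin n → Bool) (c : Bool),
        (Fin.cons b (Fin.snoc ν c) : Fin (n + 2) → Bool) = Fin.snoc (Fin.cons b ν) c :=
      fun b ν c => Fin.cons_snoc_eq_snoc_cons b ν c
    show QbfTrue _ _ ↔ QbfTrue _ _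
    unfold QbfTrue
    rw [h0]
    cases hQ : Q 0 with
    | ex =>
      apply exists_congr; intro b
      rw [show (fun i : Fin (n+1) => (Fin.snoc Q Quant.all : Fin (n+2) → Quant) i.succ) = _ from hsucc]
      rw [qbf_snoc_all (fun i : Fin n => Q i.succ) (fun ν => P (Fin.cons b ν))]
      apply qbf_congr
      intro ν
      constructor
      · intro h c; rw [← hcs]; exact h c
      · intro h c; rw [hcs]; exact h c
    | all =>
      apply forall_congr'; intro b
      rw [show (fun i : Fin (n+1) => (Fin.snoc Q Quant.all : Fin (n+2) → Quant) i.succ) = _ from hsucc]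
      rw [qbf_snoc_all (fun i : Fin n => Q i.succ) (fun ν => P (Fin.cons b ν))]
      apply qbf_congr
      intro ν
      constructor
      · intro h c; rw [← hcs]; exact h c
      · intro h c; rw [hcs]; exact h c

lemma mem_dropLast {n : ℕ} (C : Finset (Fin (n + 1) × Bool)) (l : Fin n × Bool) :
    l ∈ Clause.dropLast C ↔ (l.1.castSucc, l.2) ∈ C := by
  simp [Clause.dropLast]

lemma sat_forall_iff {n : ℕ} (φ : CNF (n + 1))
    (htaut : ∀ C ∈ φ, ¬ ((Fin.last n, true) ∈ C ∧ (Fin.last n, false) ∈ C))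
    (ν : Fin n → Bool) :
    (∀ b, CNF.sat (Fin.snoc ν b) φ) ↔ CNF.sat ν (φ.map Clause.dropLast) := by
  constructor
  · intro h C' hC'
    obtain ⟨C, hC, rfl⟩ := List.mem_map.1 hC'
    by_cases h1 : (Fin.last n, true) ∈ C
    · obtain ⟨⟨i, p⟩, hl, hv⟩ := h false C hC
      induction i using Fin.lastCases with
      | last =>
        simp only [Fin.snoc_last] at hv
        subst hv
        exact absurd ⟨h1, hl⟩ (htaut C hC)
      | cast i =>
        refine ⟨(i, p), (mem_dropLast _ _).2 hl, ?_⟩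
        simpa [Fin.snoc_castSucc] using hv
    · obtain ⟨⟨i, p⟩, hl, hv⟩ := h true C hC
      induction i using Fin.lastCases with
      | last =>
        simp only [Fin.snoc_last] at hv
        subst hv
        exact absurd hl h1
      | cast i =>
        refine ⟨(i, p), (mem_dropLast _ _).2 hl, ?_⟩
        simpa [Fin.snoc_castSucc] using hv
  · intro h b C hC
    obtain ⟨l, hl, hv⟩ := h (Clause.dropLast C) (List.mem_map.2 ⟨C, hC, rfl⟩)
    refine ⟨(l.1.castSucc, l.2), (mem_dropLast _ _).1 hl, ?_⟩
    simpa [Fin.snoc_castSucc] using hv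


/-- Reduction rule 2 of the QBF-2 algorithm, deletion of an innermost universal
variable: if no clause of `φ` contains both polarities of the innermost variable
`xₙ₊₁`, and `φ'` is obtained from `φ` by deleting every literal on `xₙ₊₁` from every
clause, then `Q₁x₁ ⋯ Qₙxₙ ∀xₙ₊₁ φ` is true iff `Q₁x₁ ⋯ Qₙxₙ φ'` is true. -/
theorem delete_innermost_universal {n : ℕ} (φ : CNF (n + 1))
    (htaut : ∀ C ∈ φ, ¬ ((Fin.last n, true) ∈ C ∧ (Fin.last n, false) ∈ C))
    (Q : Fin n → Quant) :
    QbfTrue (Fin.snoc Q Quant.all) (fun ν => CNF.sat ν φ) ↔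
      QbfTrue Q (fun ν => CNF.sat ν (φ.map Clause.dropLast)) := by
  rw [qbf_snoc_all]
  exact qbf_congr _ _ _ fun ν => sat_forall_iff φ htaut ν
end

section
/- (Reduction rule 4, resolution at an innermost existential variable of degree two.) Let φ be a CNF formula over x₁,…,xₙ in which the variable xₙ appears in exactly two clauses: positively in a clause Cᵢ and negatively in a clause Cⱼ (with Cᵢ ≠ Cⱼ, and neither clause containing both polarities of xₙ). Let φ' be the CNF formula over x₁,…,xₙ₋₁ obtained from φ by replacing Cᵢ and Cⱼ by the single resolvent clause (Cᵢ \ {xₙ}) ∪ (Cⱼ \ {¬xₙ}). Then for every choice of quantifiers Q₁,…,Qₙ₋₁ ∈ {∃,∀}, the quantified formula Q₁x₁⋯Qₙ₋₁xₙ₋₁ ∃xₙ φ is true if and only if Q₁x₁⋯Qₙ₋₁xₙ₋₁ φ' is true. -/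
/-!
Pushing the innermost `∃xₙ₊₁` into the matrix, it suffices to compare the two formulas for a fixed
valuation `ν` of the outer variables. The clauses of `rest` do not mention `xₙ₊₁`, so they do not
depend on its value, and `∃x, (x ∨ A) ∧ (¬x ∨ B)` is equivalent to `A ∨ B`.
-/

def Quant.eval : Quant → (Bool → Prop) → Prop
  | .ex, p => ∃ b, p b
  | .all, p => ∀ b, p b

theorem Quant.eval_congr (q : Quant) {p p' : Bool → Prop} (h : ∀ b, p b ↔ p' b) :
    q.eval p ↔ q.eval p' := by
  cases q
  exacts [exists_congr h, forall_congr' h]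

theorem qbfTrue_succ {n : ℕ} (Q : Fin (n + 1) → Quant) (P : (Fin (n + 1) → Bool) → Prop) :
    QbfTrue Q P ↔ (Q 0).eval fun b => QbfTrue (Fin.tail Q) fun ν => P (Fin.cons b ν) := by
  rw [QbfTrue]
  cases Q 0 <;> rfl

theorem QbfTrue.congr {n : ℕ} {Q : Fin n → Quant} {P P' : (Fin n → Bool) → Prop}
    (h : ∀ ν, P ν ↔ P' ν) : QbfTrue Q P ↔ QbfTrue Q P' := by
  induction n with
  | zero => exact h _
  | succ n ih => simp only [qbfTrue_succ]; exact Quant.eval_congr _ fun b => ih fun ν => h _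

theorem qbfTrue_snoc {n : ℕ} (Q : Fin n → Quant) (q : Quant) (P : (Fin (n + 1) → Bool) → Prop) :
    QbfTrue (Fin.snoc Q q) P ↔ QbfTrue Q fun ν => q.eval fun b => P (Fin.snoc ν b) := by
  induction n with
  | zero =>
    rw [qbfTrue_succ]
    exact Quant.eval_congr _ fun b => iff_of_eq (congrArg P (funext fun i => by fin_cases i; rfl))
  | succ n ih =>
    rw [qbfTrue_succ, qbfTrue_succ, Fin.snoc_apply_zero]
    refine Quant.eval_congr _ fun b => ?_
    have : Fin.tail (Fin.snoc Q q : Fin (n + 2) → Quant) = Fin.snoc (Fin.tail Q) q := by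
      funext i
      induction i using Fin.lastCases with
      | last => simp [Fin.tail, Fin.succ_last]
      | cast j => simp only [Fin.tail, Fin.succ_castSucc, Fin.snoc_castSucc]
    rw [this, ih]
    exact QbfTrue.congr fun ν => by simp only [Fin.cons_snoc_eq_snoc_cons]

namespace Clause

variable {n : ℕ}

theorem mem_dropLast {C : Finset (Fin (n + 1) × Bool)} {l : Fin n × Bool} :
    l ∈ dropLast C ↔ (l.1.castSucc, l.2) ∈ C := by
  simp [dropLast]

theorem dropLast_union (C D : Finset (Fin (n + 1) × Bool)) :
    dropLast (C ∪ D) = dropLast C ∪ dropLast D := by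
  ext
  simp [mem_dropLast]

theorem dropLast_erase_last (C : Finset (Fin (n + 1) × Bool)) (b : Bool) :
    dropLast (C.erase (Fin.last n, b)) = dropLast C := by
  ext
  simp [mem_dropLast, Fin.castSucc_ne_last]

theorem exists_snoc_iff (C : Finset (Fin (n + 1) × Bool)) (ν : Fin n → Bool) (b : Bool) :
    (∃ l ∈ C, (Fin.snoc ν b : Fin (n + 1) → Bool) l.1 = l.2) ↔
      (Fin.last n, b) ∈ C ∨ ∃ l ∈ dropLast C, ν l.1 = l.2 := by
  constructor
  · rintro ⟨⟨i, c⟩, hmem, hv⟩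
    induction i using Fin.lastCases with
    | last =>
      rw [Fin.snoc_last] at hv
      exact .inl (hv ▸ hmem)
    | cast j =>
      rw [Fin.snoc_castSucc] at hv
      exact .inr ⟨(j, c), mem_dropLast.2 hmem, hv⟩
  · rintro (hmem | ⟨⟨j, c⟩, hmem, hv⟩)
    · exact ⟨_, hmem, Fin.snoc_last ..⟩
    · exact ⟨(j.castSucc, c), mem_dropLast.1 hmem, by rwa [Fin.snoc_castSucc]⟩

end Clause

namespace CNF

variable {n : ℕ}

theorem sat_cons (ν : Fin n → Bool) (C : Finset (Fin n × Bool)) (φ : CNF n) :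
    sat ν (C :: φ) ↔ (∃ l ∈ C, ν l.1 = l.2) ∧ sat ν φ :=
  List.forall_mem_cons

theorem sat_iff_of_perm {φ ψ : CNF n} (h : φ.Perm ψ) (ν : Fin n → Bool) : sat ν φ ↔ sat ν ψ :=
  forall_congr' fun _ => imp_congr_left h.mem_iff

theorem sat_snoc_iff_sat_map_dropLast {φ : CNF (n + 1)}
    (hφ : ∀ C ∈ φ, ∀ b : Bool, (Fin.last n, b) ∉ C) (ν : Fin n → Bool) (b : Bool) :
    sat (Fin.snoc ν b) φ ↔ sat ν (φ.map Clause.dropLast) := by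
  simp only [sat, List.forall_mem_map]
  exact forall₂_congr fun C hC => by rw [Clause.exists_snoc_iff, or_iff_right (hφ C hC b)]

end CNF

theorem resolution_innermost_existential_general {n : ℕ} (φ rest : CNF (n + 1))
    (Ci Cj : Finset (Fin (n + 1) × Bool))
    (hφ : φ.Perm (Ci :: Cj :: rest))
    (hiPos : (Fin.last n, true) ∈ Ci) (hiNeg : (Fin.last n, false) ∉ Ci)
    (hjNeg : (Fin.last n, false) ∈ Cj) (hjPos : (Fin.last n, true) ∉ Cj)
    (hrest : ∀ C ∈ rest, ∀ b : Bool, (Fin.last n, b) ∉ C)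
    (Q : Fin n → Quant) :
    QbfTrue (Fin.snoc Q Quant.ex) (fun ν => CNF.sat ν φ) ↔
      QbfTrue Q (fun ν => CNF.sat ν
        (Clause.dropLast ((Ci.erase (Fin.last n, true)) ∪
            (Cj.erase (Fin.last n, false))) :: rest.map Clause.dropLast)) := by
  rw [qbfTrue_snoc]
  refine QbfTrue.congr fun ν => ?_
  -- `xₙ₊₁ := false` satisfies `Cj` and leaves the rest of `Ci`; `xₙ₊₁ := true` the reverse.
  simp only [Quant.eval, CNF.sat_iff_of_perm hφ, CNF.sat_cons, Clause.exists_snoc_iff,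
    CNF.sat_snoc_iff_sat_map_dropLast hrest, Clause.dropLast_union, Clause.dropLast_erase_last,
    Bool.exists_bool, hiPos, hiNeg, hjNeg, hjPos, false_or, true_or, true_and]
  simp only [Finset.mem_union, or_and_right, exists_or]

/-- Reduction rule 4 of the QBF-2 algorithm, resolution at an innermost
existential variable of degree two: suppose the innermost variable `xₙ₊₁`
appears in exactly two clauses of `φ`, positively in `Ci` and negatively in `Cj`
(with `Ci ≠ Cj`, and neither clause containing both polarities of `xₙ₊₁`), and
let `φ'` be obtained from `φ` by replacing `Ci` and `Cj` by the single resolvent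
clause `(Ci \ {xₙ₊₁}) ∪ (Cj \ {¬xₙ₊₁})`. Then `Q₁x₁ ⋯ Qₙxₙ ∃xₙ₊₁ φ` is true iff
`Q₁x₁ ⋯ Qₙxₙ φ'` is true. -/
theorem resolution_innermost_existential {n : ℕ} (φ rest : CNF (n + 1))
    (Ci Cj : Finset (Fin (n + 1) × Bool))
    (hφ : φ.Perm (Ci :: Cj :: rest))
    (hne : Ci ≠ Cj)
    (hiPos : (Fin.last n, true) ∈ Ci) (hiNeg : (Fin.last n, false) ∉ Ci)
    (hjNeg : (Fin.last n, false) ∈ Cj) (hjPos : (Fin.last n, true) ∉ Cj)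
    (hrest : ∀ C ∈ rest, ∀ b : Bool, (Fin.last n, b) ∉ C)
    (Q : Fin n → Quant) :
    QbfTrue (Fin.snoc Q Quant.ex) (fun ν => CNF.sat ν φ) ↔
      QbfTrue Q (fun ν => CNF.sat ν
        (Clause.dropLast ((Ci.erase (Fin.last n, true)) ∪
            (Cj.erase (Fin.last n, false))) :: rest.map Clause.dropLast)) :=
  resolution_innermost_existential_general φ rest Ci Cj hφ hiPos hiNeg hjNeg hjPos hrest Q
end
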